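/- arXiv:1407.3515 — 4 statements merged into one kernel-verified Lean document; each statement's English description precedes it below -/
import Mathlib

section
/- Let p be a prime number and let u be a formal power series over ℚ_p with zero constant term. Then exp(u(z)) has all of its coefficients in ℤ_p (i.e., exp(u(z)) ∈ 1 + z·ℤ_p[[z]]) if and only if exp(u(z^p) − p·u(z)) ∈ 1 + p·ℤ_p[[z]], i.e., the latter series has constant term 1 and all of its higher coefficients lie in p·ℤ_p. -/
open PowerSeries

noncomputable section

/-- Formal exponential `exp(u) = ∑ uᵏ/k!` of a power series `u`
(intended for `u` with zero constant term, where the coefficientwise sum is finite). -/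
def psExp {K : Type*} [Field K] (u : PowerSeries K) : PowerSeries K :=
  PowerSeries.mk fun n =>
    ∑ k ∈ Finset.range (n + 1), (PowerSeries.coeff n (u ^ k)) / (Nat.factorial k : K)

/-- Formal logarithm `log(1 + v) = ∑_{k≥1} (-1)^{k+1} vᵏ/k` of a power series `v`
with zero constant term. -/
def psLog {K : Type*} [Field K] (v : PowerSeries K) : PowerSeries K :=
  PowerSeries.mk fun n =>
    ∑ k ∈ Finset.Icc 1 n, ((-1 : K) ^ (k + 1)) * (PowerSeries.coeff n (v ^ k)) / (k : K)

/-- Substitution `z ↦ z^p` in a formal power series: `(psSubstPow p f)(z) = f(z^p)`. -/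
def psSubstPow {K : Type*} [Field K] (p : ℕ) (f : PowerSeries K) : PowerSeries K :=
  PowerSeries.mk fun n => if p ∣ n then PowerSeries.coeff (n / p) f else 0

/-- Gauss hypergeometric series `F(a,b|z) = ∑_n (a)_n (b)_n / (n!)² · zⁿ`. -/
def hgF (a b : ℚ) : PowerSeries ℚ :=
  PowerSeries.mk fun n =>
    (ascPochhammer ℚ n).eval a * (ascPochhammer ℚ n).eval b / (Nat.factorial n : ℚ) ^ 2

/-- `G(a,b|z) = ∑_n (a)_n (b)_n / (n!)² · (∑_{i<n} (1/(a+i) + 1/(b+i) - 2/(1+i))) · zⁿ`. -/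
def hgG (a b : ℚ) : PowerSeries ℚ :=
  PowerSeries.mk fun n =>
    (ascPochhammer ℚ n).eval a * (ascPochhammer ℚ n).eval b / (Nat.factorial n : ℚ) ^ 2 *
      ∑ i ∈ Finset.range n, (1 / (a + (i : ℚ)) + 1 / (b + (i : ℚ)) - 2 / (1 + (i : ℚ)))

/-- The Schwarz map `D(a,b|z) = G(a,b|z)/F(a,b|z)`. -/
def hgD (a b : ℚ) : PowerSeries ℚ := hgG a b * (hgF a b)⁻¹

/-- `q(a,b|z) = z · exp(D(a,b|z))`. -/
def hgq (a b : ℚ) : PowerSeries ℚ := PowerSeries.X * psExp (hgD a b)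

/-- The Dwork map `δ_p(x)`: the unique rational `y` with denominator coprime to `p`
such that `p·y - x` is an integer in `{0, …, p-1}`; explicitly `y = (x + k)/p` where
`k ∈ {0, …, p-1}` satisfies `k ≡ -x (mod p)`. -/
def dwork (p : ℕ) (x : ℚ) : ℚ :=
  (x + (((-(x.num : ZMod p)) * ((x.den : ZMod p))⁻¹).val : ℚ)) / p

/-- `f` is `p`-integral: every coefficient is a rational number with denominator
coprime to `p`, i.e. lies in `ℤ_(p)`. -/
def pIntegral (p : ℕ) (f : PowerSeries ℚ) : Prop :=
  ∀ n, ¬ (p ∣ (PowerSeries.coeff n f).den)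

/-! The series `f = exp u` satisfies `f(z^p) = exp(u(z^p) - p u(z)) · f(z)^p`, so everything is
about the quotient `g = f(z^p) / f(z)^p`.  If `f ∈ ℤ_p[[z]]`, then `f(z^p) ≡ f(z)^p (mod p)` by
the Frobenius of `𝔽_p[[z]]`, and `f(0) = 1` makes `f^p` a unit, so `g ∈ 1 + p ℤ_p[[z]]`.
Conversely, if `g ∈ 1 + p ℤ_p[[z]]` and the coefficients of `f` below degree `n` are integral,
write `f = F + z^n s` with `F` the truncation: in degree `n`, `f^p` differs from `F^p` by `p f_n`
while `f(z^p)` and `F(z^p)` agree, so `p f_n = [z^n] (F(z^p) - F^p) - [z^n] ((g - 1) F^p)`,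
which lies in `p ℤ_p`. -/

namespace PowerSeries

theorem eq_of_derivative_eq_mul_self {R : Type*} [CommRing R] [IsAddTorsionFree R]
    {w f g : R⟦X⟧} (hf : d⁄dX R f = w * f) (hg : d⁄dX R g = w * g)
    (h0 : constantCoeff f = constantCoeff g) : f = g := by
  ext n
  induction n using Nat.strong_induction_on with
  | _ n ih =>
  rcases n with _ | n
  · simpa using h0
  · have h : coeff n (d⁄dX R f) = coeff n (d⁄dX R g) := by
      rw [hf, hg, coeff_mul, coeff_mul]
      refine Finset.sum_congr rfl fun x hx => ?_
      rw [ih x.2 (Finset.Nat.antidiagonal.snd_lt hx)]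
    rw [coeff_derivative, coeff_derivative, ← Nat.cast_succ, mul_comm, ← nsmul_eq_mul,
      mul_comm, ← nsmul_eq_mul] at h
    exact (smul_right_inj n.succ_ne_zero).mp h

theorem coeff_pow_eq_zero_of_lt {R : Type*} [CommRing R] {u : R⟦X⟧} (hu : constantCoeff u = 0)
    {n k : ℕ} (h : n < k) : coeff n (u ^ k) = 0 :=
  coeff_of_lt_order _ ((Nat.cast_lt.mpr h).trans_le (le_order_pow_of_constantCoeff_eq_zero k hu))

theorem exists_add_X_pow_mul_pow_eq {R : Type*} [CommRing R] (F s : R⟦X⟧) {n : ℕ}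
    (hn : n ≠ 0) (k : ℕ) : ∃ t, (F + X ^ n * s) ^ k = F ^ k + X ^ n * t ∧
      constantCoeff t = k * constantCoeff F ^ (k - 1) * constantCoeff s := by
  obtain ⟨q, hq⟩ := sq_dvd_add_pow_sub_sub (X ^ n * s) F k
  exact ⟨(k : R⟦X⟧) * F ^ (k - 1) * s + X ^ n * (s ^ 2 * q), by linear_combination hq,
    by simp [hn]⟩

theorem natCast_mul_coeff_eq_of_expand_eq {R : Type*} [CommRing R] {f g : R⟦X⟧} {p n : ℕ}
    (hp : 1 < p) (hn : n ≠ 0) (hf0 : constantCoeff f = 1)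
    (h : expand p (by omega) f = g * f ^ p) :
    (p : R) * coeff n f =
      coeff n (expand p (by omega) (trunc n f : R⟦X⟧) - g * (trunc n f : R⟦X⟧) ^ p) := by
  set F : R⟦X⟧ := ↑(trunc n f)
  obtain ⟨s, hs⟩ : X ^ n ∣ f - F :=
    X_pow_dvd_iff.mpr fun i hi => by rw [map_sub, coeff_coe_trunc_of_lt hi, sub_self]
  have hs0 : constantCoeff s = coeff n f := by
    have := congrArg (coeff n) hs
    rwa [coeff_X_pow_mul', if_pos le_rfl, Nat.sub_self, coeff_zero_eq_constantCoeff_apply,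
      map_sub, Polynomial.coeff_coe, coeff_trunc, if_neg (lt_irrefl n), sub_zero, eq_comm] at this
  have hF0 : constantCoeff F = 1 := by
    rw [← coeff_zero_eq_constantCoeff_apply, coeff_coe_trunc_of_lt (Nat.pos_of_ne_zero hn),
      coeff_zero_eq_constantCoeff_apply, hf0]
  have hg0 : constantCoeff g = 1 := by
    simpa [hf0] using (congrArg constantCoeff h).symm
  obtain ⟨t, ht, ht0⟩ := exists_add_X_pow_mul_pow_eq F s hn p
  have hexpand : coeff n (expand p (by omega) f) = coeff n (expand p (by omega) F) := by
    rw [coeff_expand, coeff_expand]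
    split_ifs
    · exact (coeff_coe_trunc_of_lt (Nat.div_lt_self (Nat.pos_of_ne_zero hn) hp)).symm
    · rfl
  calc (p : R) * coeff n f = coeff n (X ^ n * (g * t)) := by
        rw [coeff_X_pow_mul', if_pos le_rfl, Nat.sub_self, coeff_zero_eq_constantCoeff_apply,
          map_mul, hg0, ht0, hF0, hs0]
        ring
    _ = coeff n (g * (F + X ^ n * s) ^ p - g * F ^ p) := by rw [ht]; ring_nf
    _ = _ := by rw [← hs, add_sub_cancel, map_sub, ← h, hexpand, ← map_sub]

theorem expand_card_eq_pow {F : Type*} [Field F] [Fintype F] (f : F⟦X⟧) :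
    expand (Fintype.card F) Fintype.card_ne_zero f = f ^ Fintype.card F := by
  ext n
  rw [coeff_expand, ← coeff_coe_trunc_of_lt (Nat.lt_succ_self n), ← trunc_trunc_pow,
    coeff_coe_trunc_of_lt (Nat.lt_succ_self n), ← Polynomial.coe_pow, ← FiniteField.expand_card,
    Polynomial.coeff_coe, Polynomial.coeff_expand Fintype.card_pos]
  split_ifs with h
  · rw [coeff_trunc, if_pos (Nat.lt_succ_of_le (Nat.div_le_self n _))]
  · rfl

section Ultrametric

variable {R : Type*} [NormedCommRing R] [IsUltrametricDist R]

theorem norm_coeff_mul_le {f g : R⟦X⟧} {a b : ℝ} (ha : 0 ≤ a)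
    (hf : ∀ i, ‖coeff i f‖ ≤ a) (hg : ∀ i, ‖coeff i g‖ ≤ b) (n : ℕ) :
    ‖coeff n (f * g)‖ ≤ a * b := by
  rw [coeff_mul]
  refine IsUltrametricDist.norm_sum_le_of_forall_le_of_nonneg
    (mul_nonneg ha ((norm_nonneg _).trans (hg 0))) fun i _ => ?_
  exact (norm_mul_le _ _).trans (mul_le_mul (hf _) (hg _) (norm_nonneg _) ha)

theorem norm_coeff_pow_le_one [NormOneClass R] {f : R⟦X⟧} (hf : ∀ i, ‖coeff i f‖ ≤ 1)
    (k n : ℕ) : ‖coeff n (f ^ k)‖ ≤ 1 := by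
  induction k generalizing n with
  | zero =>
    rw [pow_zero, coeff_one]
    split_ifs <;> simp
  | succ k ih =>
    rw [pow_succ]
    simpa using norm_coeff_mul_le zero_le_one ih hf n

theorem norm_coeff_inv_le_one {K : Type*} [NormedField K] [IsUltrametricDist K] {f : K⟦X⟧}
    (h0 : ‖constantCoeff f‖ = 1) (hf : ∀ i, ‖coeff i f‖ ≤ 1) (n : ℕ) :
    ‖coeff n f⁻¹‖ ≤ 1 := by
  induction n using Nat.strong_induction_on with
  | _ n ih =>
  rw [coeff_inv]
  split_ifs
  · rw [norm_inv, h0, inv_one]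
  · rw [norm_mul, norm_neg, norm_inv, h0, inv_one, one_mul]
    refine IsUltrametricDist.norm_sum_le_of_forall_le_of_nonneg zero_le_one fun x _ => ?_
    split_ifs with hx
    · rw [norm_mul]
      exact mul_le_one₀ (hf _) (norm_nonneg _) (ih _ hx)
    · simp

end Ultrametric

end PowerSeries

section Exp

variable {K : Type*} [Field K] [CharZero K] {u v : K⟦X⟧}

theorem psExp_eq_subst_exp (hu : constantCoeff u = 0) : psExp u = (exp K).subst u := by
  ext n
  rw [psExp, coeff_mk, coeff_subst' (HasSubst.of_constantCoeff_zero' hu),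
    finsum_eq_sum_of_support_subset (s := Finset.range (n + 1))]
  · refine Finset.sum_congr rfl fun k _ => ?_
    simp [coeff_exp, div_eq_inv_mul]
  · intro k hk
    contrapose! hk
    simp [coeff_pow_eq_zero_of_lt hu (by simpa using hk)]

theorem constantCoeff_psExp (u : K⟦X⟧) : constantCoeff (psExp u) = 1 := by
  rw [← coeff_zero_eq_constantCoeff_apply, psExp, coeff_mk]
  simp

theorem derivative_psExp (hu : constantCoeff u = 0) :
    d⁄dX K (psExp u) = d⁄dX K u * psExp u := by
  rw [psExp_eq_subst_exp hu, derivative_subst (HasSubst.of_constantCoeff_zero' hu),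
    derivative_exp, mul_comm]

theorem psExp_add (hu : constantCoeff u = 0) (hv : constantCoeff v = 0) :
    psExp (u + v) = psExp u * psExp v := by
  refine eq_of_derivative_eq_mul_self (derivative_psExp (by simp [hu, hv])) ?_ (by
    simp [constantCoeff_psExp])
  rw [Derivation.leibniz, derivative_psExp hu, derivative_psExp hv, map_add, smul_eq_mul,
    smul_eq_mul]
  ring

theorem psExp_zero : psExp (0 : K⟦X⟧) = 1 :=
  eq_of_derivative_eq_mul_self (derivative_psExp (map_zero _)) (by simp)
    (constantCoeff_psExp 0)

theorem psExp_nsmul (hu : constantCoeff u = 0) (k : ℕ) : psExp (k • u) = psExp u ^ k := by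
  induction k with
  | zero => rw [zero_smul, psExp_zero, pow_zero]
  | succ k ih => rw [succ_nsmul, psExp_add (by simp [hu]) hu, ih, pow_succ]

theorem expand_psExp {p : ℕ} (hp : p ≠ 0) (hu : constantCoeff u = 0) :
    expand p hp (psExp u) = psExp (expand p hp u) := by
  rw [psExp_eq_subst_exp hu, psExp_eq_subst_exp (by simp [hu]), expand_apply, expand_apply,
    subst_comp_subst_apply (HasSubst.of_constantCoeff_zero' hu) (HasSubst.X_pow hp)]

theorem expand_psExp_eq_psExp_mul_pow {p : ℕ} (hp : p ≠ 0) (hu : constantCoeff u = 0) :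
    expand p hp (psExp u) = psExp (expand p hp u - (p : K) • u) * psExp u ^ p := by
  rw [← psExp_nsmul hu, ← psExp_add (by simp [hu]) (by simp [hu]), Nat.cast_smul_eq_nsmul,
    sub_add_cancel, expand_psExp hp hu]

theorem psSubstPow_eq_expand {K : Type*} [Field K] {p : ℕ} (hp : p ≠ 0) (f : K⟦X⟧) :
    psSubstPow p f = expand p hp f := by
  ext n
  rw [psSubstPow, coeff_mk, coeff_expand]

end Exp

section Padic

variable {p : ℕ} [hp : Fact p.Prime]

theorem PadicInt.norm_le_norm_p_of_toZMod_eq_zero {x : ℤ_[p]} (hx : PadicInt.toZMod x = 0) :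
    ‖x‖ ≤ ‖(p : ℤ_[p])‖ := by
  obtain ⟨c, rfl⟩ : (p : ℤ_[p]) ∣ x := by
    rw [← Ideal.mem_span_singleton, ← PadicInt.maximalIdeal_eq_span_p, ← PadicInt.ker_toZMod]
    exact hx
  rw [norm_mul]
  exact mul_le_of_le_one_right (norm_nonneg _) (PadicInt.norm_le_one c)

theorem PadicInt.norm_coeff_expand_sub_pow_le (F : ℤ_[p]⟦X⟧) (n : ℕ) :
    ‖coeff n (expand p hp.out.ne_zero F - F ^ p)‖ ≤ ‖(p : ℤ_[p])‖ := by
  have hfrob := expand_card_eq_pow (map PadicInt.toZMod F)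
  simp only [ZMod.card] at hfrob
  refine norm_le_norm_p_of_toZMod_eq_zero ?_
  rw [← coeff_map, map_sub, map_pow, map_expand, hfrob, sub_self, map_zero]

theorem Padic.norm_coeff_expand_sub_pow_le {f : ℚ_[p]⟦X⟧} (hf : ∀ i, ‖coeff i f‖ ≤ 1)
    (n : ℕ) :
    ‖coeff n (expand p hp.out.ne_zero f - f ^ p)‖ ≤ ‖(p : ℚ_[p])‖ := by
  obtain ⟨F, rfl⟩ : ∃ F : ℤ_[p]⟦X⟧, map PadicInt.Coe.ringHom F = f :=
    ⟨PowerSeries.mk fun i => (⟨coeff i f, hf i⟩ : ℤ_[p]), by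
      ext i
      rw [coeff_map]
      exact congrArg PadicInt.Coe.ringHom (coeff_mk (R := ℤ_[p]) i _)⟩
  rw [← map_expand, ← map_pow, ← map_sub, coeff_map]
  exact (PadicInt.norm_coeff_expand_sub_pow_le F n).trans_eq
    (PadicInt.norm_p.trans Padic.norm_p.symm)

theorem Padic.norm_coeff_sub_one_le_of_expand_eq {f g : ℚ_[p]⟦X⟧} (hf0 : constantCoeff f = 1)
    (hf : ∀ i, ‖coeff i f‖ ≤ 1) (h : expand p hp.out.ne_zero f = g * f ^ p) (n : ℕ) :
    ‖coeff n (g - 1)‖ ≤ ‖(p : ℚ_[p])‖ := by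
  have hfp : f ^ p * (f ^ p)⁻¹ = 1 := PowerSeries.mul_inv_cancel _ (by simp [hf0])
  have hg : g - 1 = (expand p hp.out.ne_zero f - f ^ p) * (f ^ p)⁻¹ := by
    rw [h, sub_mul, mul_assoc, hfp, mul_one]
  rw [hg, ← mul_one ‖(p : ℚ_[p])‖]
  exact norm_coeff_mul_le (norm_nonneg _) (norm_coeff_expand_sub_pow_le hf)
    (norm_coeff_inv_le_one (by simp [hf0]) (norm_coeff_pow_le_one hf p)) n

theorem Padic.norm_coeff_le_one_of_expand_eq {f g : ℚ_[p]⟦X⟧} (hf0 : constantCoeff f = 1)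
    (hg : ∀ i, ‖coeff i (g - 1)‖ ≤ ‖(p : ℚ_[p])‖) (h : expand p hp.out.ne_zero f = g * f ^ p)
    (n : ℕ) : ‖coeff n f‖ ≤ 1 := by
  induction n using Nat.strong_induction_on with
  | _ n ih =>
  rcases Nat.eq_zero_or_pos n with rfl | hn
  · simp [hf0]
  have hcoeff : (p : ℚ_[p]) * coeff n f =
      coeff n (expand p hp.out.ne_zero (trunc n f : ℚ_[p]⟦X⟧) - (trunc n f : ℚ_[p]⟦X⟧) ^ p) -
        coeff n ((g - 1) * (trunc n f : ℚ_[p]⟦X⟧) ^ p) := by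
    rw [natCast_mul_coeff_eq_of_expand_eq hp.out.one_lt hn.ne' hf0 h, ← map_sub]
    ring_nf
  set F : ℚ_[p]⟦X⟧ := ↑(trunc n f)
  have hF : ∀ i, ‖coeff i F‖ ≤ 1 := fun i => by
    rw [Polynomial.coeff_coe, coeff_trunc]
    split_ifs with hi
    exacts [ih i hi, by simp]
  have hbound : ‖(p : ℚ_[p]) * coeff n f‖ ≤ ‖(p : ℚ_[p])‖ := by
    rw [hcoeff, sub_eq_add_neg]
    refine (IsUltrametricDist.norm_add_le_max _ _).trans (max_le ?_ ?_)
    · exact norm_coeff_expand_sub_pow_le hF n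
    · rw [norm_neg]
      simpa using norm_coeff_mul_le (norm_nonneg _) hg (norm_coeff_pow_le_one hF p) n
  have hp0 : 0 < ‖(p : ℚ_[p])‖ := norm_pos_iff.mpr (Nat.cast_ne_zero.mpr hp.out.ne_zero)
  rwa [norm_mul, mul_le_iff_le_one_right hp0] at hbound

end Padic

/-- **Dieudonné–Dwork lemma (additive version).** For `u ∈ z·ℚ_p[[z]]`,
`exp(u(z)) ∈ 1 + z·ℤ_p[[z]]` iff `exp(u(z^p) - p·u(z)) ∈ 1 + p·ℤ_p[[z]]`. -/
theorem dieudonne_dwork (p : ℕ) [hp : Fact p.Prime] (u : PowerSeries ℚ_[p])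
    (hu : PowerSeries.constantCoeff u = 0) :
    (∀ n : ℕ, ‖PowerSeries.coeff n (psExp u)‖ ≤ 1) ↔
      (PowerSeries.constantCoeff (psExp (psSubstPow p u - (p : ℚ_[p]) • u)) = 1 ∧
        ∀ n : ℕ, 0 < n → ∃ c : ℚ_[p], ‖c‖ ≤ 1 ∧
          PowerSeries.coeff n (psExp (psSubstPow p u - (p : ℚ_[p]) • u)) = p * c) := by
  have hkey := expand_psExp_eq_psExp_mul_pow hp.out.ne_zero hu
  rw [← psSubstPow_eq_expand hp.out.ne_zero u] at hkey
  set g := psExp (psSubstPow p u - (p : ℚ_[p]) • u)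
  have hg0 : constantCoeff g = 1 := constantCoeff_psExp _
  have hg : ∀ n, 0 < n → coeff n (g - 1) = coeff n g := fun n hn => by
    rw [map_sub, coeff_one, if_neg hn.ne', sub_zero]
  constructor
  · intro hf
    refine ⟨hg0, fun n hn => ⟨coeff n g / p, ?_, ?_⟩⟩
    · rw [norm_div, ← hg n hn]
      exact div_le_one_of_le₀ (Padic.norm_coeff_sub_one_le_of_expand_eq
        (constantCoeff_psExp u) hf hkey n) (norm_nonneg _)
    · field_simp [hp.out.ne_zero]
  · rintro ⟨-, hpc⟩
    refine Padic.norm_coeff_le_one_of_expand_eq (constantCoeff_psExp u) (fun n => ?_) hkey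
    rcases Nat.eq_zero_or_pos n with rfl | hn
    · simp [hg0]
    obtain ⟨c, hc, hgc⟩ := hpc n hn
    rw [hg n hn, hgc, norm_mul]
    exact mul_le_of_le_one_right (norm_nonneg _) hc
end
end

section
/- Let 𝕜 be a field of characteristic different from 2 and let a₁, b₁, a₂, b₂ ∈ 𝕜. Write σ_j = a_j + b_j and τ_j = a_j·b_j for j = 1, 2. Then the two equalities σ₁ − 2τ₁ = σ₂ − 2τ₂ and σ₁² − 5σ₁τ₁ + 5τ₁² + σ₁ − τ₁ = σ₂² − 5σ₂τ₂ + 5τ₂² + σ₂ − τ₂ hold simultaneously if and only if {a₂, b₂} = {a₁, b₁} or {a₂, b₂} = {1−a₁, 1−b₁} as unordered pairs, i.e., (a₂ = a₁ ∧ b₂ = b₁) ∨ (a₂ = b₁ ∧ b₂ = a₁) ∨ (a₂ = 1−a₁ ∧ b₂ = 1−b₁) ∨ (a₂ = 1−b₁ ∧ b₂ = 1−a₁). -/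
open PowerSeries

noncomputable section

/-!
Once `C₁` agrees, the difference of the `C₂` values factors as `(τ₂ - τ₁)(τ₂ - (1 - σ₁ + τ₁))`.
So `(σ₂, τ₂)` is either `(σ₁, τ₁)` or `(2 - σ₁, 1 - σ₁ + τ₁)`, the symmetric functions of
`(1 - a₁, 1 - b₁)`, and a pair is determined up to order by its sum and product.
-/

theorem add_eq_add_and_mul_eq_mul_iff {R : Type*} [CommRing R] [NoZeroDivisors R]
    {a b c d : R} : a + b = c + d ∧ a * b = c * d ↔ (a = c ∧ b = d) ∨ (a = d ∧ b = c) := by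
  constructor
  · rintro ⟨hs, hp⟩
    -- `a` is a root of `(X - c)(X - d) = X² - (a + b) X + a b`.
    have hroot : (a - c) * (a - d) = 0 := by linear_combination a * hs - hp
    rcases mul_eq_zero.1 hroot with hc | hd
    · have hac : a = c := sub_eq_zero.1 hc
      exact Or.inl ⟨hac, by linear_combination hs - hac⟩
    · have had : a = d := sub_eq_zero.1 hd
      exact Or.inr ⟨had, by linear_combination hs - had⟩
  · rintro (⟨rfl, rfl⟩ | ⟨rfl, rfl⟩)
    · exact ⟨rfl, rfl⟩
    · exact ⟨add_comm _ _, mul_comm _ _⟩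

section SchwarzCoefficients

variable {R : Type*} [CommRing R]

/-- `C₁(σ, τ)`, a quarter of the coefficient of `z` in `D(a,b|z)`, with `σ = a + b`, `τ = a b`. -/
def schwarzCoeffOne (σ τ : R) : R := σ - 2 * τ

/-- `4 C₂(σ, τ)`, the coefficient of `z²` in `D(a,b|z)`, where `σ = a + b`, `τ = a b`. -/
def schwarzCoeffTwo (σ τ : R) : R := σ ^ 2 - 5 * σ * τ + 5 * τ ^ 2 + σ - τ

theorem schwarzCoeffTwo_sub_schwarzCoeffTwo {σ₁ τ₁ σ₂ τ₂ : R}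
    (h : schwarzCoeffOne σ₁ τ₁ = schwarzCoeffOne σ₂ τ₂) :
    schwarzCoeffTwo σ₁ τ₁ - schwarzCoeffTwo σ₂ τ₂ = (τ₂ - τ₁) * (τ₂ - (1 - σ₁ + τ₁)) := by
  unfold schwarzCoeffOne at h
  unfold schwarzCoeffTwo
  linear_combination (σ₂ + σ₁ - 2 * τ₁ - 3 * τ₂ + 1) * h

theorem schwarzCoeffs_eq_iff [NoZeroDivisors R] {σ₁ τ₁ σ₂ τ₂ : R} :
    schwarzCoeffOne σ₁ τ₁ = schwarzCoeffOne σ₂ τ₂ ∧ schwarzCoeffTwo σ₁ τ₁ = schwarzCoeffTwo σ₂ τ₂ ↔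
      (σ₂ = σ₁ ∧ τ₂ = τ₁) ∨ (σ₂ = 2 - σ₁ ∧ τ₂ = 1 - σ₁ + τ₁) := by
  unfold schwarzCoeffOne
  constructor
  · rintro ⟨h₁, h₂⟩
    have hprod := schwarzCoeffTwo_sub_schwarzCoeffTwo h₁
    rw [h₂, sub_self, eq_comm, mul_eq_zero, sub_eq_zero, sub_eq_zero] at hprod
    rcases hprod with hτ | hτ
    · exact Or.inl ⟨by linear_combination 2 * hτ - h₁, hτ⟩
    · exact Or.inr ⟨by linear_combination 2 * hτ - h₁, hτ⟩
  · rintro (⟨rfl, rfl⟩ | ⟨rfl, rfl⟩)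
    · exact ⟨rfl, rfl⟩
    · exact ⟨by ring, by unfold schwarzCoeffTwo; ring⟩

end SchwarzCoefficients

theorem coeff_eq_iff_pair_eq_general {K : Type*} [Field K]
    (a₁ b₁ a₂ b₂ : K) :
    ((a₁ + b₁) - 2 * (a₁ * b₁) = (a₂ + b₂) - 2 * (a₂ * b₂) ∧
      (a₁ + b₁) ^ 2 - 5 * (a₁ + b₁) * (a₁ * b₁) + 5 * (a₁ * b₁) ^ 2 + (a₁ + b₁) - a₁ * b₁ =
        (a₂ + b₂) ^ 2 - 5 * (a₂ + b₂) * (a₂ * b₂) + 5 * (a₂ * b₂) ^ 2 + (a₂ + b₂) - a₂ * b₂) ↔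
      ((a₂ = a₁ ∧ b₂ = b₁) ∨ (a₂ = b₁ ∧ b₂ = a₁) ∨
        (a₂ = 1 - a₁ ∧ b₂ = 1 - b₁) ∨ (a₂ = 1 - b₁ ∧ b₂ = 1 - a₁)) := by
  have h := schwarzCoeffs_eq_iff (σ₁ := a₁ + b₁) (τ₁ := a₁ * b₁) (σ₂ := a₂ + b₂) (τ₂ := a₂ * b₂)
  rw [show 2 - (a₁ + b₁) = (1 - a₁) + (1 - b₁) by ring,
    show 1 - (a₁ + b₁) + a₁ * b₁ = (1 - a₁) * (1 - b₁) by ring,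
    add_eq_add_and_mul_eq_mul_iff, add_eq_add_and_mul_eq_mul_iff, or_assoc] at h
  exact h

/-- The first two coefficients of the Schwarz map, written in the symmetric functions
`σ_j = a_j + b_j`, `τ_j = a_j·b_j`, agree iff `{a₂,b₂} = {a₁,b₁}` or `{1-a₁,1-b₁}`,
over any field of characteristic ≠ 2. -/
theorem coeff_eq_iff_pair_eq {K : Type*} [Field K] (hchar : ringChar K ≠ 2)
    (a₁ b₁ a₂ b₂ : K) :
    ((a₁ + b₁) - 2 * (a₁ * b₁) = (a₂ + b₂) - 2 * (a₂ * b₂) ∧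
      (a₁ + b₁) ^ 2 - 5 * (a₁ + b₁) * (a₁ * b₁) + 5 * (a₁ * b₁) ^ 2 + (a₁ + b₁) - a₁ * b₁ =
        (a₂ + b₂) ^ 2 - 5 * (a₂ + b₂) * (a₂ * b₂) + 5 * (a₂ * b₂) ^ 2 + (a₂ + b₂) - a₂ * b₂) ↔
      ((a₂ = a₁ ∧ b₂ = b₁) ∨ (a₂ = b₁ ∧ b₂ = a₁) ∨
        (a₂ = 1 - a₁ ∧ b₂ = 1 - b₁) ∨ (a₂ = 1 - b₁ ∧ b₂ = 1 - a₁)) :=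
  coeff_eq_iff_pair_eq_general a₁ b₁ a₂ b₂
end
end

section
/- Let m₁, m₂ ≥ 2 be integers, let ε ∈ {1, −1}, and let p be an odd integer coprime to m₁m₂. Then the pair of congruences p(m₁+m₂) ≡ ε(m₁+m₂) (mod 2m₁m₂) and p(m₁−m₂) ≡ ε(m₁−m₂) (mod 2m₁m₂) holds if and only if either (p ≡ ε (mod 2m₁) and p ≡ ε (mod 2m₂)) or (p ≡ m₁ + ε (mod 2m₁) and p ≡ m₂ + ε (mod 2m₂)). -/
open PowerSeries

noncomputable section

/-! Put `s = p - ε`. The two congruences say that `2 m₁ m₂` divides `s (m₁ + m₂)` and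
`s (m₁ - m₂)`; adding and subtracting them shows `s = m₁ c = m₂ d` for some integers `c, d`,
and then both congruences together amount to `c ≡ d (mod 2)`. The two alternatives on the
right are exactly the cases `c, d` both even and `c, d` both odd. -/

namespace CongruenceCaseOne

variable {m₁ m₂ s : ℤ}

theorem two_mul_dvd_mul_iff_even {k : ℤ} (hk : k ≠ 0) (x : ℤ) : 2 * k ∣ k * x ↔ Even x := by
  rw [mul_comm 2 k, mul_dvd_mul_iff_left hk, even_iff_two_dvd]

theorem two_mul_dvd_mul_sub_self_iff_odd {k : ℤ} (hk : k ≠ 0) (x : ℤ) :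
    2 * k ∣ k * x - k ↔ Odd x := by
  rw [← mul_sub_one, two_mul_dvd_mul_iff_even hk, Int.even_sub_one, Int.not_even_iff_odd]

theorem dvd_of_dvd_mul_add_of_dvd_mul_sub (hm₁ : m₁ ≠ 0) (hm₂ : m₂ ≠ 0)
    (hadd : 2 * m₁ * m₂ ∣ s * (m₁ + m₂)) (hsub : 2 * m₁ * m₂ ∣ s * (m₁ - m₂)) :
    m₁ ∣ s ∧ m₂ ∣ s := by
  constructor
  · have h : 2 * m₂ * m₁ ∣ 2 * m₂ * s := by
      rw [show 2 * m₂ * m₁ = 2 * m₁ * m₂ by ring,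
        show 2 * m₂ * s = s * (m₁ + m₂) - s * (m₁ - m₂) by ring]
      exact hadd.sub hsub
    exact (mul_dvd_mul_iff_left (mul_ne_zero two_ne_zero hm₂)).1 h
  · have h : 2 * m₁ * m₂ ∣ 2 * m₁ * s := by
      rw [show 2 * m₁ * s = s * (m₁ + m₂) + s * (m₁ - m₂) by ring]
      exact hadd.add hsub
    exact (mul_dvd_mul_iff_left (mul_ne_zero two_ne_zero hm₁)).1 h

theorem dvd_mul_add_and_dvd_mul_sub_iff_of_eq_mul (hm₁ : m₁ ≠ 0) (hm₂ : m₂ ≠ 0) {c d : ℤ}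
    (hc : s = m₁ * c) (hd : s = m₂ * d) :
    (2 * m₁ * m₂ ∣ s * (m₁ + m₂) ∧ 2 * m₁ * m₂ ∣ s * (m₁ - m₂)) ↔ (Even c ↔ Even d) := by
  have hadd : s * (m₁ + m₂) = m₁ * m₂ * (c + d) := by linear_combination m₁ * hd + m₂ * hc
  have hsub : s * (m₁ - m₂) = m₁ * m₂ * (d - c) := by linear_combination m₁ * hd - m₂ * hc
  rw [hadd, hsub, mul_assoc 2, two_mul_dvd_mul_iff_even (mul_ne_zero hm₁ hm₂),
    two_mul_dvd_mul_iff_even (mul_ne_zero hm₁ hm₂), Int.even_add, Int.even_sub]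
  tauto

theorem alternatives_iff_of_eq_mul (hm₁ : m₁ ≠ 0) (hm₂ : m₂ ≠ 0) {c d : ℤ}
    (hc : s = m₁ * c) (hd : s = m₂ * d) :
    ((2 * m₁ ∣ s ∧ 2 * m₂ ∣ s) ∨ (2 * m₁ ∣ s - m₁ ∧ 2 * m₂ ∣ s - m₂)) ↔
      (Even c ↔ Even d) := by
  have hc_even : 2 * m₁ ∣ s ↔ Even c := hc ▸ two_mul_dvd_mul_iff_even hm₁ c
  have hd_even : 2 * m₂ ∣ s ↔ Even d := hd ▸ two_mul_dvd_mul_iff_even hm₂ d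
  have hc_odd : 2 * m₁ ∣ s - m₁ ↔ Odd c := hc ▸ two_mul_dvd_mul_sub_self_iff_odd hm₁ c
  have hd_odd : 2 * m₂ ∣ s - m₂ ↔ Odd d := hd ▸ two_mul_dvd_mul_sub_self_iff_odd hm₂ d
  rw [hc_even, hd_even, hc_odd, hd_odd, ← Int.not_even_iff_odd, ← Int.not_even_iff_odd]
  tauto

theorem dvd_mul_add_and_dvd_mul_sub_iff (hm₁ : m₁ ≠ 0) (hm₂ : m₂ ≠ 0) :
    (2 * m₁ * m₂ ∣ s * (m₁ + m₂) ∧ 2 * m₁ * m₂ ∣ s * (m₁ - m₂)) ↔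
      ((2 * m₁ ∣ s ∧ 2 * m₂ ∣ s) ∨ (2 * m₁ ∣ s - m₁ ∧ 2 * m₂ ∣ s - m₂)) := by
  by_cases hdvd : m₁ ∣ s ∧ m₂ ∣ s
  · obtain ⟨⟨c, hc⟩, ⟨d, hd⟩⟩ := hdvd
    rw [dvd_mul_add_and_dvd_mul_sub_iff_of_eq_mul hm₁ hm₂ hc hd,
      alternatives_iff_of_eq_mul hm₁ hm₂ hc hd]
  · refine iff_of_false (fun h ↦ hdvd (dvd_of_dvd_mul_add_of_dvd_mul_sub hm₁ hm₂ h.1 h.2)) ?_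
    rintro (⟨h₁, h₂⟩ | ⟨h₁, h₂⟩)
    · exact hdvd ⟨dvd_of_mul_left_dvd h₁, dvd_of_mul_left_dvd h₂⟩
    · exact hdvd ⟨dvd_sub_self_right.1 (dvd_of_mul_left_dvd h₁),
        dvd_sub_self_right.1 (dvd_of_mul_left_dvd h₂)⟩

end CongruenceCaseOne

open CongruenceCaseOne in
theorem congruence_case_one_general (m₁ m₂ : ℤ) (hm₁ : 2 ≤ m₁) (hm₂ : 2 ≤ m₂)
    (ε : ℤ) (p : ℤ) :
    (p * (m₁ + m₂) ≡ ε * (m₁ + m₂) [ZMOD 2 * m₁ * m₂] ∧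
      p * (m₁ - m₂) ≡ ε * (m₁ - m₂) [ZMOD 2 * m₁ * m₂]) ↔
      ((p ≡ ε [ZMOD 2 * m₁] ∧ p ≡ ε [ZMOD 2 * m₂]) ∨
        (p ≡ m₁ + ε [ZMOD 2 * m₁] ∧ p ≡ m₂ + ε [ZMOD 2 * m₂])) := by
  have modEq_iff_dvd_sub {n a b : ℤ} : a ≡ b [ZMOD n] ↔ n ∣ a - b :=
    Int.modEq_comm.trans Int.modEq_iff_dvd
  simp only [modEq_iff_dvd_sub, ← sub_mul, sub_add_eq_sub_sub_swap]
  exact dvd_mul_add_and_dvd_mul_sub_iff (by omega) (by omega)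

/-- Elementary congruence equivalence (Case 1 of the proof of the main theorem). -/
theorem congruence_case_one (m₁ m₂ : ℤ) (hm₁ : 2 ≤ m₁) (hm₂ : 2 ≤ m₂)
    (ε : ℤ) (hε : ε = 1 ∨ ε = -1) (p : ℤ) (hodd : Odd p) (hcop : IsCoprime p (m₁ * m₂)) :
    (p * (m₁ + m₂) ≡ ε * (m₁ + m₂) [ZMOD 2 * m₁ * m₂] ∧
      p * (m₁ - m₂) ≡ ε * (m₁ - m₂) [ZMOD 2 * m₁ * m₂]) ↔
      ((p ≡ ε [ZMOD 2 * m₁] ∧ p ≡ ε [ZMOD 2 * m₂]) ∨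
        (p ≡ m₁ + ε [ZMOD 2 * m₁] ∧ p ≡ m₂ + ε [ZMOD 2 * m₂])) :=
  congruence_case_one_general m₁ m₂ hm₁ hm₂ ε p
end
end

section
/- Let p be a prime number and let x₁, x₂ be integers with 0 < x₁ < x₂ and p not dividing x₂. Then δ_p(x₁/x₂) = r/x₂, where r is the unique integer with 0 ≤ r < x₂ and p·r ≡ x₁ (mod x₂). -/
open PowerSeries

noncomputable section

/-!
Write `p·r - x₁ = x₂·k`. The bounds `0 < x₁ < x₂` and `0 ≤ r < x₂` force `0 ≤ k < p`, and
reducing modulo `p` gives `x₂·k ≡ -x₁`, so `k` is the digit `dwork` adds to `x₁/x₂` before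
dividing by `p`; then `(x₁/x₂ + k)/p = r/x₂`.
-/

theorem dwork_eq_of_den_mul_eq {p : ℕ} {x : ℚ} {k : ℤ} (hk0 : 0 ≤ k) (hkp : k < p)
    (hden : IsUnit (x.den : ZMod p)) (hk : (x.den : ZMod p) * k = -x.num) :
    dwork p x = (x + k) / p := by
  have : NeZero p := ⟨by omega⟩
  have hval : ((-(x.num : ZMod p) * (x.den : ZMod p)⁻¹).val : ℤ) = k := by
    rw [← hk, mul_comm, ← mul_assoc, ZMod.inv_mul_of_unit _ hden, one_mul, ZMod.val_intCast,
      Int.emod_eq_of_lt hk0 hkp]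
  rw [dwork, ← hval, Int.cast_natCast]

theorem dwork_div_eq {p : ℕ} {a b k : ℤ} (hb0 : b ≠ 0) (hb : IsUnit (b : ZMod p))
    (hk0 : 0 ≤ k) (hkp : k < p) (hk : (b : ZMod p) * k = -a) :
    dwork p (a / b) = (a / b + k) / p := by
  obtain ⟨c, ha, hb'⟩ := Rat.num_den_mk hb0 (Rat.divInt_eq_div a b).symm
  have hac := congrArg (Int.cast : ℤ → ZMod p) ha
  have hbc := congrArg (Int.cast : ℤ → ZMod p) hb'
  push_cast at hac hbc
  obtain ⟨hc, hden⟩ := IsUnit.mul_iff.mp (hbc ▸ hb)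
  refine dwork_eq_of_den_mul_eq hk0 hkp hden (hc.mul_right_inj.mp ?_)
  linear_combination hk - (k : ZMod p) * hbc - hac

/-- Alternative description of the Dwork map on fractions in `(0,1)`:
`δ_p(x₁/x₂) = r/x₂` where `0 ≤ r < x₂` and `p·r ≡ x₁ (mod x₂)`. -/
theorem dwork_eq_of_modEq (p : ℕ) (hp : p.Prime) (x₁ x₂ : ℤ)
    (h0 : 0 < x₁) (h12 : x₁ < x₂) (hpx : ¬ ((p : ℤ) ∣ x₂))
    (r : ℤ) (hr0 : 0 ≤ r) (hrx : r < x₂) (hcong : (p : ℤ) * r ≡ x₁ [ZMOD x₂]) :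
    dwork p ((x₁ : ℚ) / (x₂ : ℚ)) = (r : ℚ) / (x₂ : ℚ) := by
  have : Fact p.Prime := ⟨hp⟩
  obtain ⟨k, hk⟩ := hcong.symm.dvd
  have hk0 : 0 ≤ k := by nlinarith
  have hkp : k < p := by nlinarith
  have hx₂ : IsUnit (x₂ : ZMod p) :=
    isUnit_iff_ne_zero.mpr <| (ZMod.intCast_zmod_eq_zero_iff_dvd x₂ p).not.mpr hpx
  have hkmod : (x₂ : ZMod p) * k = -x₁ := by
    have := congrArg (Int.cast : ℤ → ZMod p) hk
    push_cast [ZMod.natCast_self] at this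
    linear_combination -this
  rw [dwork_div_eq (by omega) hx₂ hk0 hkp hkmod]
  have hx₂Q : (x₂ : ℚ) ≠ 0 := by exact_mod_cast (show x₂ ≠ 0 by omega)
  have hpQ : (p : ℚ) ≠ 0 := by exact_mod_cast hp.ne_zero
  have hkQ : (p * r - x₁ : ℚ) = x₂ * k := by exact_mod_cast hk
  field_simp
  linear_combination -hkQ
end
end
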